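/- Let B, K, c, M be positive real numbers, let N and N' be real numbers with 0 ≤ N' ≤ N, and let ℓ be a natural number with ℓ ≤ 64·B²·K²·c/M² − N'. Then 4B·√(2c) · Σ_{s=1}^{ℓ} 1/√(N + s) ≤ 64·√2·B²·K·c/M − 8B·√(2·c·N'). -/

import Mathlib

open Finset

/-!
Each term `1/√(N+s)` is at most `2(√(N+s) - √(N+s-1))`, so the sum telescopes to at most
`2(√(N+ℓ) - √N)`. Writing `A = 8B K √c / M`, the constraint on `ℓ` reads `N + ℓ ≤ N + A² - N'`, and
`√(N + A² - N') ≤ A + √N - √N'` because `(√N - √N')(A - √N') ≥ 0`. Hence the sum is at most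
`2(A - √N')`, and multiplying by `4B√(2c)` gives the claim.
-/

lemma one_div_sqrt_add_one_le {a : ℝ} (ha : 0 ≤ a) :
    1 / Real.sqrt (a + 1) ≤ 2 * (Real.sqrt (a + 1) - Real.sqrt a) := by
  have hpos : 0 < Real.sqrt (a + 1) := Real.sqrt_pos.mpr (by linarith)
  have hmono : Real.sqrt a ≤ Real.sqrt (a + 1) := Real.sqrt_le_sqrt (by linarith)
  have hsq : Real.sqrt (a + 1) ^ 2 - Real.sqrt a ^ 2 = 1 := by
    rw [Real.sq_sqrt ha, Real.sq_sqrt (by linarith)]; ring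
  rw [div_le_iff₀ hpos]
  nlinarith [Real.sqrt_nonneg a]

lemma sum_Icc_one_div_sqrt_add_le {N : ℝ} (hN : 0 ≤ N) (ℓ : ℕ) :
    ∑ s ∈ Icc 1 ℓ, 1 / Real.sqrt (N + s) ≤ 2 * (Real.sqrt (N + ℓ) - Real.sqrt N) := by
  induction ℓ with
  | zero => simp
  | succ n ih =>
    rw [sum_Icc_succ_top (Nat.le_add_left 1 n), Nat.cast_succ, ← add_assoc]
    have hstep := one_div_sqrt_add_one_le (a := N + n) (by positivity)
    linarith

lemma sqrt_add_sq_sub_le {x y A : ℝ} (hy : 0 ≤ y) (hyx : y ≤ x) (hyA : Real.sqrt y ≤ A) :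
    Real.sqrt (x + (A ^ 2 - y)) ≤ A + Real.sqrt x - Real.sqrt y := by
  have hsy : Real.sqrt y ≤ Real.sqrt x := Real.sqrt_le_sqrt hyx
  have hx : 0 ≤ x := hy.trans hyx
  rw [Real.sqrt_le_left (by linarith [Real.sqrt_nonneg y])]
  nlinarith [Real.sq_sqrt hx, Real.sq_sqrt hy, mul_nonneg (sub_nonneg.2 hsy) (sub_nonneg.2 hyA)]

/-- For positive reals `B, K, c, M`, reals `0 ≤ N' ≤ N`, and a natural number
`ℓ ≤ 64 B² K² c / M² - N'`, one has
`4B √(2c) ∑_{s=1}^{ℓ} 1/√(N+s) ≤ 64 √2 B² K c / M - 8 B √(2 c N')`. -/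
theorem offline_saving_gap_dependent
    (B K c M : ℝ) (hB : 0 < B) (hK : 0 < K) (hc : 0 < c) (hM : 0 < M)
    (N N' : ℝ) (h0 : 0 ≤ N') (h1 : N' ≤ N) (ℓ : ℕ)
    (hℓ : (ℓ : ℝ) ≤ 64 * B ^ 2 * K ^ 2 * c / M ^ 2 - N') :
    4 * B * Real.sqrt (2 * c) * ∑ s ∈ Finset.Icc 1 ℓ, 1 / Real.sqrt (N + (s : ℝ)) ≤
      64 * Real.sqrt 2 * B ^ 2 * K * c / M - 8 * B * Real.sqrt (2 * c * N') := by
  set A := 8 * B * K * Real.sqrt c / M with hA_def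
  have hA2 : A ^ 2 = 64 * B ^ 2 * K ^ 2 * c / M ^ 2 := by
    rw [hA_def, div_pow, mul_pow, mul_pow, Real.sq_sqrt hc.le]; ring
  rw [← hA2] at hℓ
  have hN'A : Real.sqrt N' ≤ A := by
    rw [Real.sqrt_le_left (by positivity)]; linarith [ℓ.cast_nonneg (α := ℝ)]
  have hsum : ∑ s ∈ Icc 1 ℓ, 1 / Real.sqrt (N + s) ≤ 2 * (A - Real.sqrt N') :=
    calc ∑ s ∈ Icc 1 ℓ, 1 / Real.sqrt (N + s)
        ≤ 2 * (Real.sqrt (N + ℓ) - Real.sqrt N) := sum_Icc_one_div_sqrt_add_le (h0.trans h1) ℓ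
      _ ≤ 2 * (Real.sqrt (N + (A ^ 2 - N')) - Real.sqrt N) := by gcongr
      _ ≤ 2 * (A - Real.sqrt N') := by linarith [sqrt_add_sq_sub_le h0 h1 hN'A]
  calc 4 * B * Real.sqrt (2 * c) * ∑ s ∈ Icc 1 ℓ, 1 / Real.sqrt (N + s)
      ≤ 4 * B * Real.sqrt (2 * c) * (2 * (A - Real.sqrt N')) := by gcongr
    _ = 64 * Real.sqrt 2 * B ^ 2 * K * c / M - 8 * B * Real.sqrt (2 * c * N') := by
      rw [Real.sqrt_mul (by positivity) N', Real.sqrt_mul zero_le_two c, hA_def]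
      field_simp
      linear_combination 64 * B * K * Real.mul_self_sqrt hc.le
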